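/- For all integers d ≥ 1 and k ≥ 2, ∏_{i=1}^{min(k-1,d-1)} ((k-1)d - k + i + 1)/(kd - i) ≥ (1 - 1/d)^{d-1}. -/

import Mathlib

/-!
Each factor equals `((k-1)(d-1) + i) / (kd - i)`, which is symmetric in `k` and `d`. Put
`s = min k d`, so the product runs over `1 ≤ i ≤ s - 1`. Pairing the factor at `i` with the one at
`s - i`, each pair has product at least `(1 - 1/s)²`, so the product is at least
`(1 - 1/s)^(s-1)`. Finally `n ↦ (1 - 1/n)^(n-1)` is decreasing (Bernoulli's inequality applied
to `(1 - 1/n²)^(n-1)`), and `s ≤ d`.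
-/

open Finset

theorem Finset.prod_Icc_one_reflect {M : Type*} [CommMonoid M] (f : ℕ → M) (s : ℕ) :
    ∏ i ∈ Icc 1 (s - 1), f (s - i) = ∏ i ∈ Icc 1 (s - 1), f i := by
  refine prod_nbij' (s - ·) (s - ·) ?_ ?_ ?_ ?_ fun _ _ => rfl <;>
    intro i hi <;> simp only [mem_Icc] at hi ⊢ <;> omega

theorem pow_le_prod_Icc_of_sq_le_mul_reflect {R : Type*} [CommRing R] [LinearOrder R]
    [IsStrictOrderedRing R] {f : ℕ → R} {c : R} {s : ℕ}
    (hf : ∀ i ∈ Icc 1 (s - 1), 0 ≤ f i) (h : ∀ i ∈ Icc 1 (s - 1), c ^ 2 ≤ f i * f (s - i)) :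
    c ^ (s - 1) ≤ ∏ i ∈ Icc 1 (s - 1), f i := by
  refine le_of_pow_le_pow_left₀ two_ne_zero (prod_nonneg hf) ?_
  calc (c ^ (s - 1)) ^ 2 = ∏ _i ∈ Icc 1 (s - 1), c ^ 2 := by
        rw [prod_const, Nat.card_Icc, Nat.add_sub_cancel, ← pow_mul, ← pow_mul, mul_comm]
    _ ≤ ∏ i ∈ Icc 1 (s - 1), f i * f (s - i) := prod_le_prod (fun _ _ => sq_nonneg c) h
    _ = (∏ i ∈ Icc 1 (s - 1), f i) ^ 2 := by
        rw [prod_mul_distrib, prod_Icc_one_reflect, sq]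

theorem one_sub_one_div_pow_succ_le (m : ℕ) :
    (1 - 1 / ((m : ℝ) + 2)) ^ (m + 1) ≤ (1 - 1 / ((m : ℝ) + 1)) ^ m := by
  set n : ℝ := m + 1 with hn_def
  have hn : 1 ≤ n := by simp [hn_def]
  have hm : (m : ℝ) + 2 = n + 1 := by rw [hn_def]; ring
  rw [hm]
  have hx : 0 ≤ 1 - 1 / (n + 1) := by
    rw [sub_nonneg, div_le_one (by linarith)]; linarith
  have hbernoulli : 1 - 1 / (n + 1) ≤ (1 - 1 / n ^ 2) ^ m := by
    calc 1 - 1 / (n + 1) ≤ 1 + m * -(1 / n ^ 2) := by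
          rw [show (m : ℝ) = n - 1 by rw [hn_def]; ring]
          field_simp
          nlinarith
      _ ≤ (1 + -(1 / n ^ 2)) ^ m := by
          refine one_add_mul_le_pow ?_ m
          have : 1 / n ^ 2 ≤ 1 := by rw [div_le_one (by positivity)]; nlinarith
          linarith
      _ = (1 - 1 / n ^ 2) ^ m := by rw [← sub_eq_add_neg]
  calc (1 - 1 / (n + 1)) ^ (m + 1) = (1 - 1 / (n + 1)) ^ m * (1 - 1 / (n + 1)) := pow_succ _ _
    _ ≤ (1 - 1 / (n + 1)) ^ m * (1 - 1 / n ^ 2) ^ m := by gcongr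
    _ = ((1 - 1 / (n + 1)) * (1 - 1 / n ^ 2)) ^ m := (mul_pow _ _ _).symm
    _ = (1 - 1 / n) ^ m := by
        congr 1
        field_simp
        ring

theorem antitone_one_sub_one_div_pow : Antitone fun n : ℕ => (1 - 1 / (n : ℝ)) ^ (n - 1) := by
  refine antitone_nat_of_succ_le fun n => ?_
  rcases n with _ | m
  · simp
  · simpa [add_assoc, one_add_one_eq_two] using one_sub_one_div_pow_succ_le m

/-- Since `(K - 1) * D - K + x + 1 = (K - 1) * (D - 1) + x`, this is the `x`-th factor of the
product in the theorem, written so that its symmetry in `K` and `D` is visible. -/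
noncomputable def factor (K D x : ℝ) : ℝ := ((K - 1) * (D - 1) + x) / (K * D - x)

theorem factor_comm (K D x : ℝ) : factor K D x = factor D K x := by
  unfold factor; ring

theorem factor_nonneg {K D x : ℝ} (hK : 1 ≤ K) (hx : 0 ≤ x) (hxD : x ≤ D - 1) :
    0 ≤ factor K D x := by
  unfold factor
  apply div_nonneg <;> nlinarith

theorem sq_one_sub_one_div_le_factor_mul_factor {K D x : ℝ} (hK : 1 ≤ K) (hx : 1 ≤ x)
    (hxD : x ≤ D - 1) : (1 - 1 / D) ^ 2 ≤ factor K D x * factor K D (D - x) := by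
  unfold factor
  have hD : 0 < D := by linarith
  have hKD : D ≤ K * D := le_mul_of_one_le_left hD.le hK
  rw [one_sub_div hD.ne', div_mul_div_comm, div_pow,
    div_le_div_iff₀ (by positivity) (mul_pos (by linarith) (by linarith))]
  -- After cross-multiplying, RHS - LHS = D²(K-1)(D-1) + x(D-x)(2D-1).
  have hp : 0 ≤ x * (D - x) := mul_nonneg (by linarith) (by linarith)
  have hq : 0 ≤ (K - 1) * (D - 1) := mul_nonneg (by linarith) (by linarith)
  nlinarith [mul_nonneg hp (by linarith : (0:ℝ) ≤ 2 * D - 1), mul_nonneg hq (sq_nonneg D)]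

theorem one_sub_one_div_pow_le_prod_factor {K D : ℕ} (hDK : D ≤ K) :
    (1 - 1 / (D : ℝ)) ^ (D - 1) ≤ ∏ i ∈ Icc 1 (D - 1), factor K D i := by
  refine pow_le_prod_Icc_of_sq_le_mul_reflect (fun i hi => ?_) (fun i hi => ?_)
  all_goals
    obtain ⟨hi1, hiD⟩ := mem_Icc.mp hi
    have hK : (1 : ℝ) ≤ K := by exact_mod_cast (by omega : 1 ≤ K)
    have hi1' : (1 : ℝ) ≤ i := by exact_mod_cast hi1
    have hiD' : (i : ℝ) ≤ D - 1 := by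
      rw [le_sub_iff_add_le]; exact_mod_cast (by omega : i + 1 ≤ D)
  · exact factor_nonneg hK (by linarith) hiD'
  · rw [Nat.cast_sub (by omega)]
    exact sq_one_sub_one_div_le_factor_mul_factor hK hi1' hiD'

theorem stmt3_general (d k : ℕ) :
    (1 - 1 / (d : ℝ)) ^ (d - 1) ≤
      ∏ i ∈ Finset.Icc 1 (min (k - 1) (d - 1)),
        ((((k : ℝ) - 1) * d - k + i + 1) / ((k : ℝ) * d - i)) := by
  calc (1 - 1 / (d : ℝ)) ^ (d - 1)
      ≤ (1 - 1 / ((min k d : ℕ) : ℝ)) ^ (min k d - 1) :=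
        antitone_one_sub_one_div_pow (min_le_right k d)
    _ ≤ ∏ i ∈ Icc 1 (min k d - 1), factor k d i := by
        rcases le_total k d with h | h
        · simp_rw [min_eq_left h, factor_comm (k : ℝ)]
          exact one_sub_one_div_pow_le_prod_factor h
        · rw [min_eq_right h]
          exact one_sub_one_div_pow_le_prod_factor h
    _ = _ := by
        rw [show min (k - 1) (d - 1) = min k d - 1 by omega]
        refine prod_congr rfl fun i _ => ?_
        unfold factor
        ring

/-- For `d ≥ 1`, `k ≥ 2`:
`∏_{i=1}^{min(k-1,d-1)} ((k-1)d-k+i+1)/(kd-i) ≥ (1-1/d)^(d-1)`. -/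
theorem stmt3 (d k : ℕ) (hd : 1 ≤ d) (hk : 2 ≤ k) :
    (1 - 1 / (d : ℝ)) ^ (d - 1) ≤
      ∏ i ∈ Finset.Icc 1 (min (k - 1) (d - 1)),
        ((((k : ℝ) - 1) * d - k + i + 1) / ((k : ℝ) * d - i)) :=
  stmt3_general d k
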